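/- arXiv:1309.6968 — 2 statements merged into one kernel-verified Lean document; each statement's English description precedes it below -/
import Mathlib

section
/- Let T(x) = sin(π√(x+1/2)/10) / (W(x)√(x+1/2)) where W(x) = ∏_{n≥1}(1 − x/(100·2^{2n} − 1/2)). Then for every N > 0, T(n) = o(n^{−N}) as n → +∞ along the positive integers. -/
/-!
The zeros `a_j = 100·4^(j+1) - 1/2` of `W` satisfy `4 a_j ≤ a_(j+1)`, and every integer `n` lies at
distance at least `1/2` from all of them. For such a lacunary product, the factors with
`2 a_j ≤ x` have modulus at least `x / (2 a_j) ≥ 1`, so the first `K + 1` of them alone contribute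
`≳ x^(K+1)`; by lacunarity at most one zero lies in `(x/2, 2x)`, and its factor is at least
`δ / (2x)`; the remaining factors have `x / a_j` decaying geometrically, and their product is at
least `1/3` by the Weierstrass inequality `∏ (1 - t_i) ≥ 1 - ∑ t_i`. Hence `|W(n)|` eventually
exceeds every power of `n`, while the rest of `T(n)` is bounded.
-/

open Filter Finset

theorem Finset.one_sub_sum_le_prod_one_sub {ι : Type*} (s : Finset ι) {t : ι → ℝ}
    (h0 : ∀ i ∈ s, 0 ≤ t i) (h1 : ∀ i ∈ s, t i ≤ 1) :
    1 - ∑ i ∈ s, t i ≤ ∏ i ∈ s, (1 - t i) := by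
  induction s using Finset.cons_induction with
  | empty => simp
  | cons i s hi ih =>
    simp only [forall_mem_cons] at h0 h1
    rw [prod_cons, sum_cons]
    have hs : 0 ≤ ∑ j ∈ s, t j := sum_nonneg h0.2
    nlinarith [ih h0.2 h1.2]

theorem Real.one_sub_tsum_le_tprod_one_sub {ι : Type*} {t : ι → ℝ} (ht : Summable t)
    (h0 : ∀ i, 0 ≤ t i) (h1 : ∀ i, t i ≤ 1) :
    1 - ∑' i, t i ≤ ∏' i, (1 - t i) := by
  have hmul : Multipliable fun i ↦ 1 - t i := by
    simpa only [sub_eq_add_neg] using Real.multipliable_one_add_of_summable ht.neg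
  refine ge_of_tendsto' hmul.hasProd fun s ↦ ?_
  calc 1 - ∑' i, t i ≤ 1 - ∑ i ∈ s, t i := by gcongr; exact ht.sum_le_tsum s fun i _ ↦ h0 i
    _ ≤ ∏ i ∈ s, (1 - t i) := s.one_sub_sum_le_prod_one_sub (fun i _ ↦ h0 i) fun i _ ↦ h1 i

theorem div_two_mul_le_abs_one_sub_div_of_two_mul_le {a x : ℝ} (ha : 0 < a) (hx : 2 * a ≤ x) :
    x / (2 * a) ≤ |1 - x / a| := by
  have h1 : 1 ≤ x / (2 * a) := (one_le_div (by positivity)).2 hx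
  have h2 : x / a = 2 * (x / (2 * a)) := by field_simp
  rw [abs_sub_comm]
  exact le_abs.2 (Or.inl (by linarith))

theorem div_two_mul_le_abs_one_sub_div_of_le_abs_sub {a x δ : ℝ} (ha : 0 < a) (hδ : 0 < δ) (hδx : δ ≤ x)
    (hax : δ ≤ |a - x|) : δ / (2 * x) ≤ |1 - x / a| := by
  have hx : 0 < x := hδ.trans_le hδx
  rw [← div_self ha.ne', ← sub_div, abs_div, abs_of_pos ha, div_le_div_iff₀ (by positivity) ha]
  rcases le_total a (2 * x) with h | h
  · nlinarith
  · rw [abs_of_nonneg (by linarith)]; nlinarith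

namespace Lacunary

variable {a : ℕ → ℝ}

theorem pow_mul_le (hlac : ∀ j, 4 * a j ≤ a (j + 1)) (j i : ℕ) : 4 ^ i * a j ≤ a (i + j) := by
  induction i with
  | zero => simp
  | succ i ih =>
    rw [pow_succ', mul_assoc, Nat.add_right_comm]
    exact (mul_le_mul_of_nonneg_left ih (by norm_num)).trans (hlac _)

theorem pos (ha₀ : 0 < a 0) (hlac : ∀ j, 4 * a j ≤ a (j + 1)) (j : ℕ) : 0 < a j := by
  simpa using (mul_pos (by positivity) ha₀).trans_le (pow_mul_le hlac 0 j)

theorem monotone (ha₀ : 0 < a 0) (hlac : ∀ j, 4 * a j ≤ a (j + 1)) : Monotone a :=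
  monotone_nat_of_le_succ fun j ↦ by linarith [hlac j, pos ha₀ hlac j]

theorem tendsto_atTop (ha₀ : 0 < a 0) (hlac : ∀ j, 4 * a j ≤ a (j + 1)) :
    Tendsto a atTop atTop :=
  tendsto_atTop_mono (fun j ↦ by simpa using pow_mul_le hlac 0 j)
    ((tendsto_pow_atTop_atTop_of_one_lt (by norm_num : (1 : ℝ) < 4)).atTop_mul_const ha₀)

theorem one_third_le_tprod_one_sub_div (ha₀ : 0 < a 0) (hlac : ∀ j, 4 * a j ≤ a (j + 1))
    {k : ℕ} {x : ℝ} (hx : 0 ≤ x) (hk : 2 * x ≤ a k) :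
    Multipliable (fun i ↦ 1 - x / a (i + k)) ∧ 1 / 3 ≤ ∏' i, (1 - x / a (i + k)) := by
  have hbound : ∀ i, x / a (i + k) ≤ 1 / 2 * (1 / 4) ^ i := fun i ↦ by
    rw [div_le_iff₀ (pos ha₀ hlac _)]
    calc x ≤ 1 / 2 * ((1 / 4) ^ i * 4 ^ i) * a k := by
          rw [← mul_pow]; norm_num; linarith
      _ ≤ 1 / 2 * (1 / 4) ^ i * a (i + k) := by
          rw [mul_assoc (1 / 2 : ℝ), mul_assoc, mul_assoc]
          gcongr
          exact pow_mul_le hlac k i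
  have h0 : ∀ i, 0 ≤ x / a (i + k) := fun i ↦ div_nonneg hx (pos ha₀ hlac _).le
  have hgeom : Summable fun i : ℕ ↦ 1 / 2 * (1 / 4 : ℝ) ^ i :=
    (summable_geometric_of_lt_one (by norm_num) (by norm_num)).mul_left _
  have ht : Summable fun i ↦ x / a (i + k) := hgeom.of_nonneg_of_le h0 hbound
  refine ⟨by simpa only [sub_eq_add_neg] using Real.multipliable_one_add_of_summable ht.neg, ?_⟩
  have hsum : ∑' i, x / a (i + k) ≤ 2 / 3 := by
    calc ∑' i, x / a (i + k) ≤ ∑' i : ℕ, 1 / 2 * (1 / 4 : ℝ) ^ i := ht.tsum_le_tsum hbound hgeom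
      _ = 2 / 3 := by rw [tsum_mul_left, tsum_geometric_of_lt_one] <;> norm_num
  have := Real.one_sub_tsum_le_tprod_one_sub ht h0 fun i ↦ (hbound i).trans (by
    have : (1 / 4 : ℝ) ^ i ≤ 1 := pow_le_one₀ (by norm_num) (by norm_num)
    linarith)
  linarith

theorem exists_const_mul_pow_le_abs_tprod (ha₀ : 0 < a 0) (hlac : ∀ j, 4 * a j ≤ a (j + 1))
    {δ : ℝ} (hδ : 0 < δ) (K : ℕ) :
    ∃ C > 0, ∀ x, δ ≤ x → 2 * a K ≤ x → (∀ j, δ ≤ |a j - x|) →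
      C * x ^ K ≤ |∏' j, (1 - x / a j)| := by
  have ha := pos ha₀ hlac
  set P := ∏ j ∈ range (K + 1), 2 * a j
  have hP : 0 < P := prod_pos fun j _ ↦ by linarith [ha j]
  refine ⟨δ / (6 * P), by positivity, fun x hδx hKx hdist ↦ ?_⟩
  have hx : 0 < x := hδ.trans_le hδx
  have hex : ∃ m, x < 2 * a m :=
    ((tendsto_atTop ha₀ hlac).eventually_gt_atTop (x / 2)).exists.imp fun m hm ↦ by linarith
  obtain ⟨m, hm, hhead⟩ : ∃ m, x < 2 * a m ∧ ∀ j ∈ range m, 2 * a j ≤ x :=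
    ⟨Nat.find hex, Nat.find_spec hex, fun j hj ↦ not_lt.1 (Nat.find_min hex (mem_range.1 hj))⟩
  have hKm : K + 1 ≤ m := by
    by_contra! h
    linarith [monotone ha₀ hlac (Nat.lt_succ_iff.1 h)]
  obtain ⟨hmul, htail⟩ := one_third_le_tprod_one_sub_div ha₀ hlac (k := m + 1) hx.le
    (by linarith [hlac m])
  rw [← hmul.prod_mul_tprod_nat_mul' (f := fun j ↦ 1 - x / a j), abs_mul, abs_prod,
    prod_range_succ, abs_of_pos (lt_of_lt_of_le (by norm_num) htail)]
  have hH : x ^ (K + 1) / P ≤ ∏ j ∈ range m, |1 - x / a j| :=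
    calc x ^ (K + 1) / P = ∏ j ∈ range (K + 1), x / (2 * a j) := by
          rw [prod_div_distrib, prod_const, card_range]
      _ ≤ ∏ j ∈ range m, x / (2 * a j) :=
          prod_le_prod_of_subset_of_one_le (range_subset_range.2 hKm)
            (fun j _ ↦ by have := ha j; positivity)
            fun j hj _ ↦ (one_le_div (by linarith [ha j])).2 (hhead j hj)
      _ ≤ ∏ j ∈ range m, |1 - x / a j| :=
          prod_le_prod (fun j _ ↦ by have := ha j; positivity)
            fun j hj ↦ div_two_mul_le_abs_one_sub_div_of_two_mul_le (ha j) (hhead j hj)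
  have hM := div_two_mul_le_abs_one_sub_div_of_le_abs_sub (ha m) hδ hδx (hdist m)
  calc δ / (6 * P) * x ^ K = x ^ (K + 1) / P * (δ / (2 * x)) * (1 / 3) := by
        field_simp; ring
    _ ≤ _ := by gcongr

theorem eventually_pow_le_abs_tprod (ha₀ : 0 < a 0) (hlac : ∀ j, 4 * a j ≤ a (j + 1))
    {δ : ℝ} (hδ : 0 < δ) (K : ℕ) :
    ∀ᶠ x in atTop, (∀ j, δ ≤ |a j - x|) → x ^ K ≤ |∏' j, (1 - x / a j)| := by
  obtain ⟨C, hC, hbound⟩ := exists_const_mul_pow_le_abs_tprod ha₀ hlac hδ (K + 1)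
  filter_upwards [eventually_ge_atTop δ, eventually_ge_atTop (2 * a (K + 1)),
    eventually_ge_atTop C⁻¹] with x hδx hKx hCx hdist
  have hx : 0 < x := hδ.trans_le hδx
  calc x ^ K ≤ C * x * x ^ K := le_mul_of_one_le_left (by positivity) (by
        rwa [← inv_le_iff_one_le_mul₀' hC])
    _ = C * x ^ (K + 1) := by ring
    _ ≤ _ := hbound x hδx hKx hdist

end Lacunary

theorem Int.half_le_abs_cast_sub_half (k : ℤ) : 1 / 2 ≤ |(k : ℝ) - 1 / 2| := by
  rcases le_or_gt k 0 with hk | hk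
  · have : (k : ℝ) ≤ 0 := by exact_mod_cast hk
    exact le_abs.2 (Or.inr (by linarith))
  · have : (1 : ℝ) ≤ k := by exact_mod_cast hk
    exact le_abs.2 (Or.inl (by linarith))

theorem eventually_pow_le_abs_tprod_pnat (K : ℕ) :
    ∀ᶠ n : ℕ in atTop,
      (n : ℝ) ^ K ≤ |∏' k : ℕ+, (1 - (n : ℝ) / (100 * 2 ^ (2 * (k : ℕ)) - 1 / 2))| := by
  have hlac : ∀ j : ℕ, 4 * (100 * 2 ^ (2 * (j + 1)) - 1 / 2 : ℝ) ≤
      100 * 2 ^ (2 * (j + 1 + 1)) - 1 / 2 := fun j ↦ by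
    have : (2 : ℝ) ^ (2 * (j + 1 + 1)) = 4 * 2 ^ (2 * (j + 1)) := by ring
    linarith
  filter_upwards [tendsto_natCast_atTop_atTop.eventually
    (Lacunary.eventually_pow_le_abs_tprod (by norm_num) hlac one_half_pos K)] with n hn
  rw [tprod_pnat_eq_tprod_succ (f := fun k ↦ 1 - (n : ℝ) / (100 * 2 ^ (2 * k) - 1 / 2))]
  refine hn fun j ↦ ?_
  convert Int.half_le_abs_cast_sub_half (100 * 2 ^ (2 * (j + 1)) - n) using 2
  push_cast
  ring

theorem pow_mul_abs_div_mul_le_inv {x w s c : ℝ} {N : ℕ} (hx : 0 < x) (hw : x ^ (N + 1) ≤ |w|)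
    (hs : 1 ≤ s) (hc : |c| ≤ 1) : x ^ N * |c / (w * s)| ≤ x⁻¹ := by
  have hw0 : 0 < |w| := (pow_pos hx _).trans_le hw
  rw [abs_div, abs_mul, abs_of_pos (by linarith : 0 < s)]
  calc x ^ N * (|c| / (|w| * s)) ≤ x ^ N * (1 / x ^ (N + 1)) := by
        gcongr
        exact hw.trans (le_mul_of_one_le_right hw0.le hs)
    _ = x⁻¹ := by field_simp; ring

/-- with `W(x) = ∏_{k≥1}(1 - x/(100·2^{2k} - 1/2))` and
`T(x) = sin(π√(x+1/2)/10)/(W(x)√(x+1/2))`, one has `T(n) = o(n^{-N})` as `n → +∞`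
along the positive integers, for every `N`. -/
theorem stmt7 :
    ∀ N : ℕ,
      Filter.Tendsto
        (fun n : ℕ =>
          (n : ℝ) ^ N *
            |Real.sin (Real.pi * Real.sqrt ((n : ℝ) + 1 / 2) / 10) /
              ((∏' k : ℕ+, (1 - (n : ℝ) / (100 * 2 ^ (2 * (k : ℕ)) - 1 / 2))) *
                Real.sqrt ((n : ℝ) + 1 / 2))|)
        Filter.atTop (nhds 0) := by
  intro N
  refine squeeze_zero' (Eventually.of_forall fun n ↦ by positivity) ?_
    (tendsto_inv_atTop_zero.comp tendsto_natCast_atTop_atTop)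
  filter_upwards [eventually_pow_le_abs_tprod_pnat (N + 1), eventually_ge_atTop 1] with n hW hn
  have hn' : (1 : ℝ) ≤ n := by exact_mod_cast hn
  exact pow_mul_abs_div_mul_le_inv (by linarith) hW (Real.one_le_sqrt.2 (by linarith))
    (Real.abs_sin_le_one _)
end

section
/- Let G be an entire function with a simple zero at w ∈ ℂ, and suppose G is the Fourier transform of a compactly supported distribution φ on (a,b). Then G(z)/(z − w) is an entire function of the same exponential type, and it is the Fourier transform of a compactly supported distribution on (a,b) with support contained in the convex hull of the support of φ. -/
/-! The quotient is the difference quotient `dslope G w`, which is entire by the removable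
singularity theorem. Away from `w` it is dominated by `G` itself, and on the compact disc
`‖z - w‖ ≤ 1` its ratio to the (continuous, positive) weight is bounded, so the weighted
bound survives with a larger constant. -/

open Metric

theorem dslope_eq_div_sub_of_eq_zero {G : ℂ → ℂ} {w z : ℂ} (hw : G w = 0) (hz : z ≠ w) :
    dslope G w z = G z / (z - w) := by
  rw [dslope_of_ne _ hz, slope_def_field, hw, sub_zero]

theorem Differentiable.dslope {E : Type*} [NormedAddCommGroup E] [NormedSpace ℂ E]
    [CompleteSpace E] {G : ℂ → E} (hG : Differentiable ℂ G) (w : ℂ) :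
    Differentiable ℂ (dslope G w) := by
  rw [← differentiableOn_univ] at hG ⊢
  exact (Complex.differentiableOn_dslope Filter.univ_mem).2 hG

theorem exists_norm_le_mul_weight_of_eq_div_sub {F G : ℂ → ℂ} {W : ℂ → ℝ} {w : ℂ} {C : ℝ}
    (hF : Continuous F) (hW : Continuous W) (hW_pos : ∀ z, 0 < W z)
    (hG : ∀ z, ‖G z‖ ≤ C * W z) (hFG : ∀ z, z ≠ w → F z = G z / (z - w)) :
    ∃ C' : ℝ, ∀ z, ‖F z‖ ≤ C' * W z := by
  obtain ⟨M, hM⟩ := (isCompact_closedBall w 1).exists_bound_of_continuousOn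
    (hF.norm.div hW fun z => (hW_pos z).ne').continuousOn
  refine ⟨max C M, fun z => ?_⟩
  rcases le_or_gt ‖z - w‖ 1 with hnear | hfar
  · have hratio : ‖F z‖ / W z ≤ M :=
      (Real.le_norm_self _).trans (hM z (mem_closedBall_iff_norm.2 hnear))
    calc ‖F z‖ ≤ M * W z := (div_le_iff₀ (hW_pos z)).1 hratio
      _ ≤ max C M * W z := mul_le_mul_of_nonneg_right (le_max_right C M) (hW_pos z).le
  · have hzw : z ≠ w := by rintro rfl; simp at hfar; linarith
    calc ‖F z‖ = ‖G z‖ / ‖z - w‖ := by rw [hFG z hzw, norm_div]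
      _ ≤ ‖G z‖ := div_le_self (norm_nonneg _) hfar.le
      _ ≤ C * W z := hG z
      _ ≤ max C M * W z := mul_le_mul_of_nonneg_right (le_max_left C M) (hW_pos z).le

theorem stmt10_general (c d : ℝ)
    (G : ℂ → ℂ) (hG : Differentiable ℂ G)
    (w : ℂ) (hw : G w = 0)
    (C : ℝ) (N : ℕ)
    (hbound : ∀ z : ℂ, ‖G z‖ ≤ C * (1 + ‖z‖) ^ N * Real.exp (max (-c * z.im) (-d * z.im))) :
    ∃ F : ℂ → ℂ, Differentiable ℂ F ∧ (∀ z : ℂ, z ≠ w → F z = G z / (z - w)) ∧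
      ∃ C' : ℝ, ∃ N' : ℕ, ∀ z : ℂ,
        ‖F z‖ ≤ C' * (1 + ‖z‖) ^ N' * Real.exp (max (-c * z.im) (-d * z.im)) := by
  have hFG : ∀ z, z ≠ w → dslope G w z = G z / (z - w) :=
    fun z hz => dslope_eq_div_sub_of_eq_zero hw hz
  obtain ⟨C', hC'⟩ := exists_norm_le_mul_weight_of_eq_div_sub
    (W := fun z => (1 + ‖z‖) ^ N * Real.exp (max (-c * z.im) (-d * z.im)))
    (hG.dslope w).continuous (by fun_prop) (fun z => by positivity)
    (fun z => (hbound z).trans_eq (mul_assoc _ _ _)) hFG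
  exact ⟨dslope G w, hG.dslope w, hFG, C', N, fun z => (hC' z).trans_eq (mul_assoc _ _ _).symm⟩

/-- if the entire function `G` has a simple zero at `w` and is the Fourier
transform of a compactly supported distribution on `(a,b)` — encoded, via Paley–Wiener–Schwartz,
by the growth bound `‖G(z)‖ ≤ C(1+‖z‖)^N e^{max(-c·Im z, -d·Im z)}` for a compact interval
`[c,d] ⊂ (a,b)` — then `G(z)/(z-w)` extends to an entire function satisfying a bound of the
same form (same exponential type, support in the same interval). -/
theorem stmt10 (a b c d : ℝ) (hac : a < c) (hcd : c ≤ d) (hdb : d < b)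
    (G : ℂ → ℂ) (hG : Differentiable ℂ G)
    (w : ℂ) (hw : G w = 0) (hw' : deriv G w ≠ 0)
    (C : ℝ) (N : ℕ)
    (hbound : ∀ z : ℂ, ‖G z‖ ≤ C * (1 + ‖z‖) ^ N * Real.exp (max (-c * z.im) (-d * z.im))) :
    ∃ F : ℂ → ℂ, Differentiable ℂ F ∧ (∀ z : ℂ, z ≠ w → F z = G z / (z - w)) ∧
      ∃ C' : ℝ, ∃ N' : ℕ, ∀ z : ℂ,
        ‖F z‖ ≤ C' * (1 + ‖z‖) ^ N' * Real.exp (max (-c * z.im) (-d * z.im)) :=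
  stmt10_general c d G hG w hw C N hbound
end
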